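/- Let V be a finite set with a metric d_G (graph distance) and let {(M_k, C_k)}_{k=1}^N be pairs where M_k : V → {I,X,Y,Z} and C_k is a submeasurement of M_k (C_k(v) ∈ {I, M_k(v)} for all v). Suppose that for every vertex v and every function σ : B_d(v) → {I,X,Y,Z} on the closed ball of radius d around v, the number of indices k with M_k restricted to B_d(v) equal to σ and C_k(v) ≠ I is even. Then for any family of functions h_v assigning ±1 to each pair (local symbol at v, restriction of the measurement to B_d(v)), the product over all k of ∏_{v : C_k(v) ≠ I} h_v(C_k(v), M_k|_{B_d(v)}) equals 1. -/

import Mathlib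

/-!
Exchange the two products so that each vertex `v` is handled separately. The factor of
submeasurement `k` at `v` depends only on `v`'s view of `M k`, its restriction to the `d`-ball
around `v`, because an active `v` measures `C k v = M k v`. Grouping the `k` by this view, the
parity condition says that every view occurs among the active `k` an even number of times, so its
`±1` factor squares away.
-/

open scoped Classical

inductive Pauli | I | X | Y | Z
deriving DecidableEq

open Finset

theorem Finset.prod_ite_eq_one_of_even_card_fiber {ι α M : Type*} [CommMonoid M] [DecidableEq α]
    (s : Finset ι) (p : ι → Prop) [DecidablePred p] (f : ι → α) (φ : α → M)
    (hφ : ∀ a, φ a ^ 2 = 1) (heven : ∀ i ∈ s, p i → Even #{j ∈ s | p j ∧ f j = f i}) :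
    ∏ i ∈ s, (if p i then φ (f i) else 1) = 1 := by
  rw [← prod_filter, prod_comp]
  refine prod_eq_one fun b hb => ?_
  obtain ⟨i, hi, rfl⟩ := mem_image.1 hb
  rw [mem_filter] at hi
  obtain ⟨m, hm⟩ := heven i hi.1 hi.2
  rw [filter_filter, hm, ← two_mul, pow_mul, hφ, one_pow]

section BallRestrict

variable {V α : Type*} (dist : V → V → ℕ) (d : ℕ) (v : V) (a₀ : α)

def ballRestrict (m : V → α) : V → α :=
  fun u => if dist v u ≤ d then m u else a₀

theorem ballRestrict_eq_ballRestrict_iff (m m' : V → α) :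
    ballRestrict dist d v a₀ m = ballRestrict dist d v a₀ m' ↔
      ∀ u, dist v u ≤ d → m u = m' u := by
  simp only [ballRestrict, funext_iff]
  refine forall_congr' fun u => ?_
  by_cases hu : dist v u ≤ d <;> simp [hu]

theorem ballRestrict_apply_self (hv : dist v v = 0) (m : V → α) :
    ballRestrict dist d v a₀ m v = m v := by
  simp [ballRestrict, hv]

end BallRestrict

theorem stmt7_general {V : Type} [Fintype V] (N d : ℕ)
    (dG : V → V → ℕ) (hrefl : ∀ v, dG v v = 0)
    (M C : Fin N → V → Pauli)
    (hsub : ∀ k v, C k v = Pauli.I ∨ C k v = M k v)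
    (hpar : ∀ (v : V) (σ : V → Pauli),
      Even ((Finset.univ.filter (fun k =>
        (∀ u, dG v u ≤ d → M k u = σ u) ∧ C k v ≠ Pauli.I)).card)) :
    ∀ h : V → Pauli → (V → Pauli) → ℤ,
      (∀ v σ m, h v σ m = 1 ∨ h v σ m = -1) →
      (∏ k, ∏ v, if C k v = Pauli.I then 1
        else h v (C k v) (fun u => if dG v u ≤ d then M k u else Pauli.I)) = 1 := by
  intro h hh
  rw [prod_comm]
  refine prod_eq_one fun v _ => ?_
  let R := ballRestrict dG d v Pauli.I
  have hterm : ∀ k, (if C k v = Pauli.I then 1 else h v (C k v) (R (M k))) =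
      if C k v ≠ Pauli.I then h v (R (M k) v) (R (M k)) else 1 := by
    intro k
    rcases hsub k v with hC | hC
    · simp [hC]
    · rw [show R (M k) v = M k v from ballRestrict_apply_self dG d v Pauli.I (hrefl v) (M k), hC,
        ite_not]
  refine (prod_congr rfl fun k _ => hterm k).trans <|
    prod_ite_eq_one_of_even_card_fiber _ _ _ (fun τ => h v (τ v) τ)
      (fun τ => sq_eq_one_iff.2 (hh v (τ v) τ)) fun k _ _ => ?_
  simpa only [R, ballRestrict_eq_ballRestrict_iff, and_comm] using hpar v (M k)

/-- Deterministic core of the d-LHV* contradiction lemma: if the pairs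
`(M k, C k)` of measurements and submeasurements satisfy the distance-`d` parity
condition at every vertex, then every communication-assisted deterministic
assignment (each vertex's ±1 output depending on its own symbol and the
measurement restricted to the radius-`d` ball) yields total product `1`. -/
theorem stmt7 {V : Type} [Fintype V] [DecidableEq V] (N d : ℕ)
    (dG : V → V → ℕ) (hrefl : ∀ v, dG v v = 0)
    (M C : Fin N → V → Pauli)
    (hsub : ∀ k v, C k v = Pauli.I ∨ C k v = M k v)
    (hpar : ∀ (v : V) (σ : V → Pauli),
      Even ((Finset.univ.filter (fun k =>
        (∀ u, dG v u ≤ d → M k u = σ u) ∧ C k v ≠ Pauli.I)).card)) :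
    ∀ h : V → Pauli → (V → Pauli) → ℤ,
      (∀ v σ m, h v σ m = 1 ∨ h v σ m = -1) →
      (∏ k, ∏ v, if C k v = Pauli.I then 1
        else h v (C k v) (fun u => if dG v u ≤ d then M k u else Pauli.I)) = 1 :=
  stmt7_general N d dG hrefl M C hsub hpar
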